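/- For any E-linear code C, (SHull(C))_Res ⊆ SHull(C_Res) and SHull(C_Tor) ⊆ (SHull(C))_Tor; moreover if C is free then both inclusions are equalities. -/

import Mathlib

open Finset

/-- The non-unital ring `E`, realized as pairs `(u, v) ∈ F₂ × F₂`
representing `uκ + vζ`. -/
def Ering : Type := (ZMod 2) × (ZMod 2)

namespace Ering

instance : AddCommGroup Ering := inferInstanceAs (AddCommGroup ((ZMod 2) × (ZMod 2)))
instance : DecidableEq Ering := inferInstanceAs (DecidableEq ((ZMod 2) × (ZMod 2)))
instance : Fintype Ering := inferInstanceAs (Fintype ((ZMod 2) × (ZMod 2)))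

instance : Mul Ering := ⟨fun a b => (a.1 * b.1, a.2 * b.1)⟩

instance : NonUnitalRing Ering :=
  { (inferInstance : AddCommGroup Ering), (inferInstance : Mul Ering) with
    left_distrib := by decide
    right_distrib := by decide
    zero_mul := by decide
    mul_zero := by decide
    mul_assoc := by decide }

/-- The generator κ. -/
def kappa : Ering := ((1 : ZMod 2), (0 : ZMod 2))
/-- The generator τ. -/
def tau : Ering := ((1 : ZMod 2), (1 : ZMod 2))
/-- ζ = κ + τ. -/
def zeta : Ering := ((0 : ZMod 2), (1 : ZMod 2))

/-- The scalar action of `F₂` on `E`: `u • e = e` if `u = 1`, else `0`. -/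
def fsmul (u : ZMod 2) (e : Ering) : Ering := if u = 1 then e else 0

/-- `E`-vectors of length `2n`, written as a pair `(u | v)` of halves of length `n`. -/
abbrev VE (n : ℕ) := (Fin n → Ering) × (Fin n → Ering)

/-- `F₂`-vectors of length `2n`, written as a pair of halves of length `n`. -/
abbrev VF (n : ℕ) := (Fin n → ZMod 2) × (Fin n → ZMod 2)

/-- Symplectic inner product on `E^{2n}`: `⟨(u|v),(u'|v')⟩ₛ = ⟨u,v'⟩ + ⟨v,u'⟩`. -/
def sympE {n : ℕ} (x y : VE n) : Ering := ∑ i, x.1 i * y.2 i + ∑ i, x.2 i * y.1 i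

/-- Symplectic inner product on `F₂^{2n}`. -/
def sympF {n : ℕ} (x y : VF n) : ZMod 2 := ∑ i, x.1 i * y.2 i + ∑ i, x.2 i * y.1 i

/-- An `E`-linear code: a left `E`-submodule of `E^{2n}`. -/
def IsLinearCode {n : ℕ} (C : Set (VE n)) : Prop :=
  (0 : VE n) ∈ C ∧ (∀ x ∈ C, ∀ y ∈ C, x + y ∈ C) ∧
    (∀ e : Ering, ∀ x ∈ C, ((fun i => e * x.1 i, fun i => e * x.2 i) : VE n) ∈ C)

/-- Componentwise reduction `π : E^{2n} → F₂^{2n}`, `π(uκ + vζ) = u`. -/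
def resVec {n : ℕ} (x : VE n) : VF n := (fun i => (x.1 i).1, fun i => (x.2 i).1)

/-- For `e ∈ E` and `v ∈ F₂^{2n}`, the vector `ev ∈ E^{2n}` with entries `vᵢ • e`. -/
def evec {n : ℕ} (e : Ering) (v : VF n) : VE n :=
  (fun i => fsmul (v.1 i) e, fun i => fsmul (v.2 i) e)

/-- The residue code `C_Res = π(C)`. -/
def resCode {n : ℕ} (C : Set (VE n)) : Set (VF n) := resVec '' C

/-- The torsion code `C_Tor = {v : ζv ∈ C}`. -/
def torCode {n : ℕ} (C : Set (VE n)) : Set (VF n) := {v | evec zeta v ∈ C}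

/-- The left symplectic dual. -/
def leftDual {n : ℕ} (C : Set (VE n)) : Set (VE n) := {z | ∀ w ∈ C, sympE z w = 0}

/-- The right symplectic dual. -/
def rightDual {n : ℕ} (C : Set (VE n)) : Set (VE n) := {z | ∀ w ∈ C, sympE w z = 0}

/-- The two-sided symplectic dual. -/
def dual {n : ℕ} (C : Set (VE n)) : Set (VE n) := leftDual C ∩ rightDual C

/-- The binary symplectic dual of `D ⊆ F₂^{2n}`. -/
def dualF {n : ℕ} (D : Set (VF n)) : Set (VF n) := {z | ∀ w ∈ D, sympF z w = 0}

/-- The two-sided symplectic hull. -/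
def SHull {n : ℕ} (C : Set (VE n)) : Set (VE n) := C ∩ dual C

/-- The left symplectic hull. -/
def LSHull {n : ℕ} (C : Set (VE n)) : Set (VE n) := C ∩ leftDual C

/-- The right symplectic hull. -/
def RSHull {n : ℕ} (C : Set (VE n)) : Set (VE n) := C ∩ rightDual C

/-- Symplectic hull of a binary code. -/
def SHullF {n : ℕ} (D : Set (VF n)) : Set (VF n) := D ∩ dualF D

/-- A free `E`-linear code: residue and torsion codes coincide. -/
def IsFree {n : ℕ} (C : Set (VE n)) : Prop := resCode C = torCode C

end Ering

/-!
Write `x ∈ E^{2n}` as `κ a + ζ b` with `a = resVec x`, `b = secVec x`. As `(κ a + ζ b)(κ a' + ζ b') =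
κ aa' + ζ ba'`, the symplectic product `⟨x, x'⟩ₛ` has `κ`-coordinate `⟨a, a'⟩ₛ` and `ζ`-coordinate
`⟨b, a'⟩ₛ`. Together with `ζ C ⊆ C` and `κ C ⊆ C` this gives `(SHull C)_Res = C_Res ∩ C_Tor^⊥` and
`(SHull C)_Tor = C_Res^⊥ ∩ C_Tor`. Since `C_Res ⊆ C_Tor` implies `C_Tor^⊥ ⊆ C_Res^⊥`, both inclusions
are now set algebra, and they become equalities when `C_Res = C_Tor`.
-/

namespace Ering

variable {n : ℕ}

def secVec (x : VE n) : VF n := (fun i => (x.1 i).2, fun i => (x.2 i).2)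

def smulVec (e : Ering) (x : VE n) : VE n := (fun i => e * x.1 i, fun i => e * x.2 i)

theorem IsLinearCode.add_mem {C : Set (VE n)} (hC : IsLinearCode C) {x y : VE n} (hx : x ∈ C)
    (hy : y ∈ C) : x + y ∈ C :=
  hC.2.1 x hx y hy

theorem IsLinearCode.smulVec_mem {C : Set (VE n)} (hC : IsLinearCode C) (e : Ering) {x : VE n}
    (hx : x ∈ C) : smulVec e x ∈ C :=
  hC.2.2 e x hx

theorem sympF_comm (x y : VF n) : sympF x y = sympF y x := by
  simp only [sympF, mul_comm (x.1 _), mul_comm (x.2 _)]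
  exact add_comm _ _

@[simp]
theorem sympF_zero_left (y : VF n) : sympF 0 y = 0 := by
  simp [sympF]

@[simp]
theorem sympF_zero_right (x : VF n) : sympF x 0 = 0 := by
  simp [sympF]

theorem sympE_eq (x y : VE n) :
    sympE x y = (sympF (resVec x) (resVec y), sympF (secVec x) (resVec y)) :=
  Prod.ext (congrArg₂ (· + ·) Prod.fst_sum Prod.fst_sum)
    (congrArg₂ (· + ·) Prod.snd_sum Prod.snd_sum)

theorem sympE_eq_zero_iff {x y : VE n} :
    sympE x y = 0 ↔
      sympF (resVec x) (resVec y) = 0 ∧ sympF (secVec x) (resVec y) = 0 := by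
  rw [sympE_eq]
  exact Prod.ext_iff

theorem resVec_evec_zeta (v : VF n) : resVec (evec zeta v) = 0 := by
  have h : ∀ u : ZMod 2, (fsmul u zeta).1 = 0 := by decide
  ext i <;> exact h _

theorem secVec_evec_zeta (v : VF n) : secVec (evec zeta v) = v := by
  have h : ∀ u : ZMod 2, (fsmul u zeta).2 = u := by decide
  ext i <;> exact h _

theorem smulVec_zeta (x : VE n) : smulVec zeta x = evec zeta (resVec x) := by
  have h : ∀ a : Ering, zeta * a = fsmul a.1 zeta := by decide
  ext i <;> exact h _

theorem add_smulVec_kappa (x : VE n) : x + smulVec kappa x = evec zeta (secVec x) := by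
  have h : ∀ a : Ering, a + kappa * a = fsmul a.2 zeta := by decide
  ext i <;> exact h _

theorem resVec_smulVec_kappa (x : VE n) : resVec (smulVec kappa x) = resVec x := by
  have h : ∀ a : Ering, (kappa * a).1 = a.1 := by decide
  ext i <;> exact h _

theorem secVec_smulVec_kappa (x : VE n) : secVec (smulVec kappa x) = 0 := by
  have h : ∀ a : Ering, (kappa * a).2 = 0 := by decide
  ext i <;> exact h _

theorem resVec_mem_torCode {C : Set (VE n)} (hC : IsLinearCode C) {x : VE n} (hx : x ∈ C) :
    resVec x ∈ torCode C := by
  change evec zeta (resVec x) ∈ C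
  rw [← smulVec_zeta]
  exact hC.smulVec_mem zeta hx

theorem secVec_mem_torCode {C : Set (VE n)} (hC : IsLinearCode C) {x : VE n} (hx : x ∈ C) :
    secVec x ∈ torCode C := by
  change evec zeta (secVec x) ∈ C
  rw [← add_smulVec_kappa]
  exact hC.add_mem hx (hC.smulVec_mem kappa hx)

theorem resCode_subset_torCode {C : Set (VE n)} (hC : IsLinearCode C) : resCode C ⊆ torCode C := by
  rintro _ ⟨x, hx, rfl⟩
  exact resVec_mem_torCode hC hx

/-- For `⊇`, a witness `x ∈ C` is replaced by `κ x`, which has the same residue and no `ζ`-part. -/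
theorem resCode_SHull {C : Set (VE n)} (hC : IsLinearCode C) :
    resCode (SHull C) = resCode C ∩ dualF (torCode C) := by
  ext u
  constructor
  · rintro ⟨x, ⟨hxC, -, hxR⟩, rfl⟩
    refine ⟨⟨x, hxC, rfl⟩, fun v hv => ?_⟩
    have h := (sympE_eq_zero_iff.mp (hxR _ hv)).2
    rwa [secVec_evec_zeta, sympF_comm] at h
  · rintro ⟨⟨x, hxC, rfl⟩, hu⟩
    refine ⟨smulVec kappa x, ⟨hC.smulVec_mem kappa hxC, fun w hw => ?_, fun w hw => ?_⟩,
      resVec_smulVec_kappa x⟩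
    · rw [sympE_eq_zero_iff, resVec_smulVec_kappa, secVec_smulVec_kappa]
      exact ⟨hu _ (resVec_mem_torCode hC hw), sympF_zero_left _⟩
    · rw [sympE_eq_zero_iff, resVec_smulVec_kappa, sympF_comm, sympF_comm (secVec w)]
      exact ⟨hu _ (resVec_mem_torCode hC hw), hu _ (secVec_mem_torCode hC hw)⟩

theorem evec_zeta_mem_dual_iff {C : Set (VE n)} {v : VF n} :
    evec zeta v ∈ dual C ↔ v ∈ dualF (resCode C) := by
  simp only [dual, leftDual, rightDual, Set.mem_inter_iff, Set.mem_ofPred_eq, sympE_eq_zero_iff,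
    resVec_evec_zeta, secVec_evec_zeta, sympF_zero_left, sympF_zero_right, true_and, and_self,
    implies_true, and_true, dualF, resCode, Set.forall_mem_image]

theorem torCode_SHull (C : Set (VE n)) : torCode (SHull C) = dualF (resCode C) ∩ torCode C := by
  ext v
  exact and_comm.trans (and_congr_left' evec_zeta_mem_dual_iff)

theorem dualF_anti {D D' : Set (VF n)} (h : D ⊆ D') : dualF D' ⊆ dualF D :=
  fun _ hz w hw => hz w (h hw)

end Ering

open Ering
/-- `(SHull C)_Res ⊆ SHull(C_Res)` and `SHull(C_Tor) ⊆ (SHull C)_Tor`,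
with equalities when `C` is free. -/
theorem Ering.shull_res_tor_incl {n : ℕ} (C : Set (VE n)) (hC : IsLinearCode C) :
    resCode (SHull C) ⊆ SHullF (resCode C) ∧
    SHullF (torCode C) ⊆ torCode (SHull C) ∧
    (IsFree C →
      resCode (SHull C) = SHullF (resCode C) ∧
      torCode (SHull C) = SHullF (torCode C)) := by
  have hdual := dualF_anti (resCode_subset_torCode hC)
  rw [resCode_SHull hC, torCode_SHull, SHullF, SHullF]
  refine ⟨Set.inter_subset_inter_right _ hdual, fun v ⟨hvT, hvD⟩ => ⟨hdual hvD, hvT⟩,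
    fun hfree => ?_⟩
  rw [show resCode C = torCode C from hfree]
  exact ⟨rfl, Set.inter_comm _ _⟩
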